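/- Let G be a finite group acting on a finite set X with the property that for all i ∈ X and g ∈ G there exists some g' ∈ G with g'(k) = k for all k < i and g'(g^{-1}(i)) = i whenever g ∈ G_{[i]} (this is automatic). Then any g ∈ G can be written as a product of at most m switch-table entries times an element of the kernel, where m = |X|; i.e., the switch-table entries generate G modulo the kernel of the action. -/

import Mathlib

open Classical

/-- The pointwise stabilizer `G_{[i]}` of `{0,...,i-1}` for a group `G` acting on `Fin m`. -/
def pstab (G : Type*) [Group G] (m : ℕ) [MulAction G (Fin m)] (i : ℕ) : Subgroup G where
  carrier := {g : G | ∀ k : Fin m, (k : ℕ) < i → g • k = k}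
  one_mem' := fun k _ => one_smul G k
  mul_mem' := by
    intro a b ha hb k hk
    rw [mul_smul, hb k hk, ha k hk]
  inv_mem' := by
    intro a ha k hk
    conv_lhs => rw [← ha k hk]
    exact inv_smul_smul a k

/-- An `m`-switch table for `G`: `s i j` is an element of `G_{[i]}` mapping `j` to `i`
if one exists, and the identity otherwise; by convention `s i i = 1`. -/
def IsSwitchTable (G : Type*) [Group G] (m : ℕ) [MulAction G (Fin m)]
    (s : Fin m → Fin m → G) : Prop :=
  (∀ i : Fin m, s i i = 1) ∧
  ∀ i j : Fin m,
    ((∃ g : G, g ∈ pstab G m (i : ℕ) ∧ g • j = i) →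
      (s i j ∈ pstab G m (i : ℕ) ∧ s i j • j = i)) ∧
    ((¬ ∃ g : G, g ∈ pstab G m (i : ℕ) ∧ g • j = i) → s i j = 1)

/-- `σ_i = 1 + #{j > i : s i j ≠ 1}`. -/
noncomputable def sigmaRow (G : Type*) [Group G] (m : ℕ) [MulAction G (Fin m)]
    (s : Fin m → Fin m → G) (i : Fin m) : ℕ :=
  1 + (Finset.univ.filter fun j : Fin m => i < j ∧ s i j ≠ 1).card

theorem pstab_antitone (G : Type*) [Group G] (m : ℕ) [MulAction G (Fin m)] :
    Antitone (pstab G m) :=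
  fun _ _ hij _ hg k hk => hg k (lt_of_lt_of_le hk hij)

theorem Subgroup.closure_union_eq_top_of_exists_list_prod {G : Type*} [Group G] (S : Set G)
    (K : Subgroup G) (h : ∀ g : G, ∃ l : List G, (∀ x ∈ l, x ∈ S) ∧ l.prod * g⁻¹ ∈ K) :
    Subgroup.closure (S ∪ K) = ⊤ := by
  refine eq_top_iff.mpr fun g _ => ?_
  obtain ⟨l, hlS, hlK⟩ := h g
  rw [show g = (l.prod * g⁻¹)⁻¹ * l.prod by group]
  exact mul_mem (inv_mem (Subgroup.subset_closure (Or.inr hlK)))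
    (list_prod_mem fun x hx => Subgroup.subset_closure (Or.inl (hlS x hx)))

namespace IsSwitchTable

variable {G : Type*} [Group G] {m : ℕ} [MulAction G (Fin m)] {s : Fin m → Fin m → G}

/-- Sifting step: `s i (g⁻¹ • i)` agrees with `g` on `{0, …, i}`, so dividing it off
moves `g` one level down the stabilizer chain. -/
theorem mul_inv_mem_pstab_succ (hs : IsSwitchTable G m s) {i : Fin m} {g : G}
    (hg : g ∈ pstab G m i) : g * (s i (g⁻¹ • i))⁻¹ ∈ pstab G m (i + 1) := by
  obtain ⟨hσ, hσi⟩ := (hs.2 i (g⁻¹ • i)).1 ⟨g, hg, smul_inv_smul g i⟩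
  have hσ_inv : (s i (g⁻¹ • i))⁻¹ • i = g⁻¹ • i := inv_smul_eq_iff.mpr hσi.symm
  intro k hk
  rcases (Nat.lt_succ_iff_lt_or_eq.mp hk) with hki | hki
  · rw [mul_smul, (pstab G m i).inv_mem hσ k hki, hg k hki]
  · rw [Fin.ext hki, mul_smul, hσ_inv, smul_inv_smul]

theorem exists_list_of_mem_pstab (hs : IsSwitchTable G m s) (n : ℕ) :
    ∀ (i : ℕ), m ≤ i + n → ∀ g ∈ pstab G m i, ∃ l : List G, l.length ≤ n ∧
      (∀ x ∈ l, ∃ a b : Fin m, x = s a b) ∧ l.prod * g⁻¹ ∈ pstab G m m := by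
  induction n with
  | zero =>
    intro i hi g hg
    exact ⟨[], le_rfl, by simp, by simpa using pstab_antitone G m hi hg⟩
  | succ n ih =>
    intro i hi g hg
    by_cases hmi : m ≤ i
    · exact ⟨[], by simp, by simp, by simpa using pstab_antitone G m hmi hg⟩
    set iF : Fin m := ⟨i, by omega⟩
    set σ := s iF (g⁻¹ • iF)
    obtain ⟨l, hl_len, hl_entries, hl_prod⟩ :=
      ih (i + 1) (by omega) (g * σ⁻¹) (hs.mul_inv_mem_pstab_succ (i := iF) hg)
    refine ⟨l ++ [σ], by simpa using hl_len, ?_, ?_⟩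
    · simpa [or_imp, forall_and] using ⟨hl_entries, iF, g⁻¹ • iF, rfl⟩
    · simpa [List.prod_append, mul_assoc] using hl_prod

end IsSwitchTable

theorem switch_table_generates_general (G : Type*) [Group G] (m : ℕ)
    [MulAction G (Fin m)] (s : Fin m → Fin m → G) (hs : IsSwitchTable G m s) :
    (∀ g : G, ∃ l : List G, l.length ≤ m ∧ (∀ x ∈ l, ∃ i j : Fin m, x = s i j) ∧
        l.prod * g⁻¹ ∈ pstab G m m) ∧
      Subgroup.closure ({x : G | ∃ i j : Fin m, x = s i j} ∪ (pstab G m m : Set G)) = ⊤ := by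
  have sift : ∀ g : G, ∃ l : List G, l.length ≤ m ∧ (∀ x ∈ l, ∃ i j : Fin m, x = s i j) ∧
      l.prod * g⁻¹ ∈ pstab G m m := fun g =>
    hs.exists_list_of_mem_pstab m 0 (by omega) g fun _ hk => absurd hk (Nat.not_lt_zero _)
  refine ⟨sift, Subgroup.closure_union_eq_top_of_exists_list_prod _ _ fun g => ?_⟩
  obtain ⟨l, -, hl_entries, hl_prod⟩ := sift g
  exact ⟨l, hl_entries, hl_prod⟩

/-- Every `g ∈ G` is a product of at most `m` switch-table entries times an element of the
kernel `G_{[m]}`; hence the switch-table entries together with the kernel generate `G`. -/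
theorem switch_table_generates (G : Type*) [Group G] [Fintype G] (m : ℕ)
    [MulAction G (Fin m)] (s : Fin m → Fin m → G) (hs : IsSwitchTable G m s) :
    (∀ g : G, ∃ l : List G, l.length ≤ m ∧ (∀ x ∈ l, ∃ i j : Fin m, x = s i j) ∧
        l.prod * g⁻¹ ∈ pstab G m m) ∧
      Subgroup.closure ({x : G | ∃ i j : Fin m, x = s i j} ∪ (pstab G m m : Set G)) = ⊤ :=
  switch_table_generates_general G m s hs
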